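/- Let A be a real B×N matrix of rank r with singular values σ₁ ≥ … ≥ σ_r in (0,1] and orthonormal singular vectors ξ_j ∈ ℝ^B, ξ̂_j ∈ ℝ^N, and let f : [0,∞) → (0,1] be a continuous strictly decreasing interpolant with f(0)=1, f(j)=σ_j, f(t)→0. Let φ : (0,1]×(0,∞) → ℝ with s ↦ |1−φ(s,α)| and s ↦ |φ(s,α)|/s nonincreasing on (0,1] for the given α > 0. Let p ∈ [1,∞) and let q, q′ > 1 satisfy 1/q + 1/q′ = 1. With b = Σ_j b_j ξ_j, b^δ = Σ_j b_j^δ ξ_j, x = Σ_j (b_j/σ_j) ξ̂_j, x^{α,δ} = Σ_j b_j^δ (φ(σ_j,α)/σ_j) ξ̂_j, there is a constant C₂ depending only on p, q and the singular vectors such that ‖x − x^{α,δ}‖_p ≤ C₂ (Σ_j |b_j/σ_j|^{pq})^{1/(pq)} ( ∫_0^{r+1} |1−φ(f(t),α)|^{pq′} dt )^{1/(pq′)} + C₂ (Σ_j |b_j − b_j^δ|^{pq})^{1/(pq)} ( ∫_0^{r+1} (|φ(f(t),α)|/f(t))^{pq′} dt )^{1/(pq′)}. -/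

import Mathlib

/-!
The error is `x - x^{α,δ} = ∑ⱼ dⱼ ξ̂ⱼ` with
`dⱼ = (bⱼ/σⱼ)(1 - φ(σⱼ,α)) + (bⱼ - bⱼ^δ) φ(σⱼ,α)/σⱼ`. The entries of the unit vectors `ξ̂ⱼ`
lie in `[-1, 1]`, so `‖x - x^{α,δ}‖_p ≤ N^{1/p} ∑ⱼ |dⱼ|`, and each of the `r` coefficients is
estimated separately: `|bⱼ/σⱼ|` and `|bⱼ - bⱼ^δ|` by the `ℓ^{pq}` norms of their sequences, and
a filter factor `g(σⱼ) = g(f(j+1))` by `(∫_{j+1}^{j+2} g(f t)^{pq'} dt)^{1/(pq')}`, because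
`g ∘ f` is nondecreasing. This gives the estimate with `C₂ = N^{1/p} r`.
-/

open MeasureTheory Matrix

theorem abs_le_rpow_sum_abs_rpow {ι : Type*} [Fintype ι] (u : ι → ℝ) {s : ℝ} (hs : 0 < s)
    (j : ι) : |u j| ≤ (∑ k, |u k| ^ s) ^ (1 / s) := by
  calc |u j| = (|u j| ^ s) ^ (1 / s) := by
        rw [one_div, Real.rpow_rpow_inv (abs_nonneg _) hs.ne']
    _ ≤ (∑ k, |u k| ^ s) ^ (1 / s) := by
        gcongr
        exact Finset.single_le_sum (f := fun k => |u k| ^ s) (fun k _ => by positivity)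
          (Finset.mem_univ j)

theorem rpow_sum_abs_rpow_le_of_abs_le {ι : Type*} [Fintype ι] {v : ι → ℝ} {M p : ℝ}
    (hp : 0 < p) (hM : ∀ i, |v i| ≤ M) :
    (∑ i, |v i| ^ p) ^ (1 / p) ≤ (Fintype.card ι : ℝ) ^ (1 / p) * M := by
  rcases isEmpty_or_nonempty ι with _ | ⟨⟨i₀⟩⟩
  · simp [Real.zero_rpow (inv_pos.2 hp).ne']
  have hM0 : 0 ≤ M := (abs_nonneg _).trans (hM i₀)
  calc (∑ i, |v i| ^ p) ^ (1 / p) ≤ (∑ _i : ι, M ^ p) ^ (1 / p) := by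
        gcongr with i; exact hM i
    _ = (Fintype.card ι : ℝ) ^ (1 / p) * M := by
        rw [Finset.sum_const, Finset.card_univ, nsmul_eq_mul,
          Real.mul_rpow (Nat.cast_nonneg _) (by positivity), one_div,
          Real.rpow_rpow_inv hM0 hp.ne']

theorem abs_apply_le_one_of_dotProduct_self_eq_one {n : Type*} [Fintype n] {v : n → ℝ}
    (hv : v ⬝ᵥ v = 1) (i : n) : |v i| ≤ 1 := by
  refine abs_le_one_iff_mul_self_le_one.2 ?_
  rw [← hv]
  exact Finset.single_le_sum (f := fun k => v k * v k) (fun k _ => mul_self_nonneg _)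
    (Finset.mem_univ i)

theorem abs_sum_smul_apply_le {ι n : Type*} [Fintype ι] {v : ι → n → ℝ}
    (hv : ∀ j i, |v j i| ≤ 1) (d : ι → ℝ) (i : n) :
    |(∑ j, d j • v j) i| ≤ ∑ j, |d j| := by
  rw [Finset.sum_apply]
  refine (Finset.abs_sum_le_sum_abs _ _).trans (Finset.sum_le_sum fun j _ => ?_)
  rw [Pi.smul_apply, smul_eq_mul, abs_mul]
  exact mul_le_of_le_one_right (abs_nonneg _) (hv j i)

theorem rpow_sum_abs_sum_smul_apply_rpow_le {ι n : Type*} [Fintype ι] [Fintype n]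
    {v : ι → n → ℝ} (hv : ∀ j, v j ⬝ᵥ v j = 1) {d : ι → ℝ} {M p : ℝ} (hp : 0 < p)
    (hd : ∀ j, |d j| ≤ M) :
    (∑ i, |(∑ j, d j • v j) i| ^ p) ^ (1 / p) ≤
      (Fintype.card n : ℝ) ^ (1 / p) * (Fintype.card ι * M) := by
  refine rpow_sum_abs_rpow_le_of_abs_le hp fun i => ?_
  calc |(∑ j, d j • v j) i|
      ≤ ∑ j, |d j| :=
        abs_sum_smul_apply_le (fun j => abs_apply_le_one_of_dotProduct_self_eq_one (hv j)) d i
    _ ≤ ∑ _j : ι, M := Finset.sum_le_sum fun j _ => hd j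
    _ = Fintype.card ι * M := by simp

theorem MonotoneOn.le_intervalIntegral {H : ℝ → ℝ} {a b k : ℝ} (hH : MonotoneOn H (Set.Icc a b))
    (hH0 : ∀ t ∈ Set.Icc a b, 0 ≤ H t) (hak : a ≤ k) (hkb : k + 1 ≤ b) :
    H k ≤ ∫ t in a..b, H t := by
  have hab : a ≤ b := by linarith
  have hint : IntervalIntegrable H volume a b := by
    rw [← Set.uIcc_of_le hab] at hH
    exact hH.intervalIntegrable
  have hk_mem : k ∈ Set.Icc a b := ⟨hak, by linarith⟩
  calc H k = ∫ _t in k..(k + 1), H k := by simp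
    _ ≤ ∫ t in k..(k + 1), H t := by
        refine intervalIntegral.integral_mono_on (by linarith) intervalIntegrable_const
          (hint.mono_set ?_) fun t ht => hH hk_mem ⟨hak.trans ht.1, ht.2.trans hkb⟩ ht.1
        rw [Set.uIcc_of_le hab, Set.uIcc_of_le (by linarith)]
        exact Set.Icc_subset_Icc hak hkb
    _ ≤ ∫ t in a..b, H t :=
        intervalIntegral.integral_mono_interval hak (by linarith) hkb
          ((ae_restrict_iff' measurableSet_Ioc).2 (.of_forall fun t ht => hH0 t ⟨ht.1.le, ht.2⟩))
          hint

theorem le_rpow_intervalIntegral_comp_rpow {f g : ℝ → ℝ} {S : Set ℝ} {s R k : ℝ}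
    (hf : AntitoneOn f (Set.Ici 0)) (hf_mem : Set.MapsTo f (Set.Ici 0) S)
    (hg : AntitoneOn g S) (hg0 : ∀ x ∈ S, 0 ≤ g x)
    (hs : 0 < s) (hk : 0 ≤ k) (hkR : k + 1 ≤ R) :
    g (f k) ≤ (∫ t in (0 : ℝ)..R, g (f t) ^ s) ^ (1 / s) := by
  have hmono : MonotoneOn (fun t => g (f t) ^ s) (Set.Icc 0 R) := by
    intro t ht u hu htu
    exact Real.rpow_le_rpow (hg0 _ (hf_mem ht.1)) ((hg.comp hf hf_mem) ht.1 hu.1 htu) hs.le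
  have hint := hmono.le_intervalIntegral
    (fun t ht => Real.rpow_nonneg (hg0 _ (hf_mem ht.1)) s) hk hkR
  have hgk := hg0 _ (hf_mem (Set.mem_Ici.2 hk))
  calc g (f k) = (g (f k) ^ s) ^ (1 / s) := by rw [one_div, Real.rpow_rpow_inv hgk hs.ne']
    _ ≤ _ := by gcongr

theorem abs_div_sub_mul_div_le {σ : ℝ} (hσ : 0 < σ) (b b' φ : ℝ) :
    |b / σ - b' * φ / σ| ≤ |b / σ| * |1 - φ| + |b - b'| * (|φ| / σ) := by
  have hsplit : b / σ - b' * φ / σ = b / σ * (1 - φ) + (b - b') * (φ / σ) := by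
    field_simp; ring
  rw [hsplit]
  refine (abs_add_le _ _).trans_eq ?_
  simp only [abs_mul, abs_div, abs_of_pos hσ]

theorem stmt_14_general {N r : ℕ}
    (σ : Fin r → ℝ) (hσ : ∀ j, σ j ∈ Set.Ioc (0 : ℝ) 1)
    (ξhat : Fin r → Fin N → ℝ)
    (hξhat : ∀ i j, ξhat i ⬝ᵥ ξhat j = if i = j then 1 else 0)
    (p q q' : ℝ) (hp : 1 ≤ p) (hq : 1 < q) (hq' : 1 < q') :
    ∃ C₂ : ℝ, ∀ f : ℝ → ℝ,
      ContinuousOn f (Set.Ici 0) → StrictAntiOn f (Set.Ici 0) →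
      (∀ t : ℝ, 0 ≤ t → f t ∈ Set.Ioc (0 : ℝ) 1) → f 0 = 1 →
      (∀ j : Fin r, f ((j : ℕ) + 1) = σ j) →
      Filter.Tendsto f Filter.atTop (nhds 0) →
      ∀ (φ : ℝ → ℝ → ℝ) (α : ℝ), 0 < α →
      AntitoneOn (fun s => |1 - φ s α|) (Set.Ioc (0 : ℝ) 1) →
      AntitoneOn (fun s => |φ s α| / s) (Set.Ioc (0 : ℝ) 1) →
      ∀ bc bδ : Fin r → ℝ,
      (∑ i, |(∑ j, (bc j / σ j) • ξhat j) i -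
          (∑ j, (bδ j * φ (σ j) α / σ j) • ξhat j) i| ^ p) ^ (1 / p) ≤
        C₂ * (∑ j, |bc j / σ j| ^ (p * q)) ^ (1 / (p * q)) *
            (∫ t in (0 : ℝ)..(r + 1), |1 - φ (f t) α| ^ (p * q')) ^ (1 / (p * q')) +
          C₂ * (∑ j, |bc j - bδ j| ^ (p * q)) ^ (1 / (p * q)) *
            (∫ t in (0 : ℝ)..(r + 1), (|φ (f t) α| / f t) ^ (p * q')) ^ (1 / (p * q')) := by
  refine ⟨(N : ℝ) ^ (1 / p) * r, fun f _ hf_anti hf_mem _ hfσ _ φ α _ hg hh bc bδ => ?_⟩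
  have hp0 : 0 < p := by linarith
  have hpq : 0 < p * q := by nlinarith
  have hpq' : 0 < p * q' := by nlinarith
  set A := (∑ j, |bc j / σ j| ^ (p * q)) ^ (1 / (p * q))
  set C := (∑ j, |bc j - bδ j| ^ (p * q)) ^ (1 / (p * q))
  set G := (∫ t in (0 : ℝ)..(r + 1), |1 - φ (f t) α| ^ (p * q')) ^ (1 / (p * q'))
  set H := (∫ t in (0 : ℝ)..(r + 1), (|φ (f t) α| / f t) ^ (p * q')) ^ (1 / (p * q'))
  have hfilter (g : ℝ → ℝ) (hg : AntitoneOn g (Set.Ioc 0 1))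
      (hg0 : ∀ x ∈ Set.Ioc (0 : ℝ) 1, 0 ≤ g x) (j : Fin r) :
      g (σ j) ≤ (∫ t in (0 : ℝ)..(r + 1), g (f t) ^ (p * q')) ^ (1 / (p * q')) := by
    rw [← hfσ j]
    have hj : ((j : ℕ) : ℝ) + 1 ≤ r := by exact_mod_cast j.is_lt
    exact le_rpow_intervalIntegral_comp_rpow hf_anti.antitoneOn (fun t ht => hf_mem t ht) hg hg0
      hpq' (by positivity) (by linarith)
  have hcoeff (j : Fin r) : |bc j / σ j - bδ j * φ (σ j) α / σ j| ≤ A * G + C * H := by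
    have hG := hfilter _ hg (fun _ _ => abs_nonneg _) j
    have hH := hfilter _ hh (fun x hx => div_nonneg (abs_nonneg _) hx.1.le) j
    have hA := abs_le_rpow_sum_abs_rpow (fun j => bc j / σ j) hpq j
    have hC := abs_le_rpow_sum_abs_rpow (fun j => bc j - bδ j) hpq j
    refine (abs_div_sub_mul_div_le (hσ j).1 _ _ _).trans (add_le_add ?_ ?_)
    · exact mul_le_mul hA hG (abs_nonneg _) ((abs_nonneg _).trans hA)
    · exact mul_le_mul hC hH (div_nonneg (abs_nonneg _) (hσ j).1.le) ((abs_nonneg _).trans hC)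
  have herr (i : Fin N) :
      (∑ j, (bc j / σ j) • ξhat j) i - (∑ j, (bδ j * φ (σ j) α / σ j) • ξhat j) i =
        (∑ j, (bc j / σ j - bδ j * φ (σ j) α / σ j) • ξhat j) i := by
    simp only [Finset.sum_apply, Pi.smul_apply, smul_eq_mul, ← Finset.sum_sub_distrib, sub_mul]
  simp only [herr]
  calc _ ≤ (Fintype.card (Fin N) : ℝ) ^ (1 / p) * (Fintype.card (Fin r) * (A * G + C * H)) :=
        rpow_sum_abs_sum_smul_apply_rpow_le (fun j => by simpa using hξhat j j) hp0 hcoeff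
    _ = _ := by simp only [Fintype.card_fin]; ring

/-- Hölder-refined error estimate for filtered regularization: for conjugate
exponents `q, q′ > 1`, `1/q + 1/q′ = 1`, there is a constant `C₂` depending only on
`p`, `q` and the singular vectors such that
`‖x − x^{α,δ}‖_p ≤ C₂ (Σ_j |b_j/σ_j|^{pq})^{1/(pq)} (∫_0^{r+1}|1−φ(f(t),α)|^{pq′} dt)^{1/(pq′)}
 + C₂ (Σ_j |b_j − b_j^δ|^{pq})^{1/(pq)} (∫_0^{r+1}(|φ(f(t),α)|/f(t))^{pq′} dt)^{1/(pq′)}`. -/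
theorem stmt_14 {B N r : ℕ} (A : Matrix (Fin B) (Fin N) ℝ) (hrank : A.rank = r)
    (σ : Fin r → ℝ) (hσ : ∀ j, σ j ∈ Set.Ioc (0 : ℝ) 1)
    (hσord : ∀ i j : Fin r, i ≤ j → σ j ≤ σ i)
    (ξ : Fin r → Fin B → ℝ) (ξhat : Fin r → Fin N → ℝ)
    (hξ : ∀ i j, ξ i ⬝ᵥ ξ j = if i = j then 1 else 0)
    (hξhat : ∀ i j, ξhat i ⬝ᵥ ξhat j = if i = j then 1 else 0)
    (hA : ∀ j, A.mulVec (ξhat j) = σ j • ξ j)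
    (hAT : ∀ j, A.transpose.mulVec (ξ j) = σ j • ξhat j)
    (p q q' : ℝ) (hp : 1 ≤ p) (hq : 1 < q) (hq' : 1 < q')
    (hqq' : 1 / q + 1 / q' = 1) :
    ∃ C₂ : ℝ, ∀ f : ℝ → ℝ,
      ContinuousOn f (Set.Ici 0) → StrictAntiOn f (Set.Ici 0) →
      (∀ t : ℝ, 0 ≤ t → f t ∈ Set.Ioc (0 : ℝ) 1) → f 0 = 1 →
      (∀ j : Fin r, f ((j : ℕ) + 1) = σ j) →
      Filter.Tendsto f Filter.atTop (nhds 0) →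
      ∀ (φ : ℝ → ℝ → ℝ) (α : ℝ), 0 < α →
      AntitoneOn (fun s => |1 - φ s α|) (Set.Ioc (0 : ℝ) 1) →
      AntitoneOn (fun s => |φ s α| / s) (Set.Ioc (0 : ℝ) 1) →
      ∀ bc bδ : Fin r → ℝ,
      (∑ i, |(∑ j, (bc j / σ j) • ξhat j) i -
          (∑ j, (bδ j * φ (σ j) α / σ j) • ξhat j) i| ^ p) ^ (1 / p) ≤
        C₂ * (∑ j, |bc j / σ j| ^ (p * q)) ^ (1 / (p * q)) *
            (∫ t in (0 : ℝ)..(r + 1), |1 - φ (f t) α| ^ (p * q')) ^ (1 / (p * q')) +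
          C₂ * (∑ j, |bc j - bδ j| ^ (p * q)) ^ (1 / (p * q)) *
            (∫ t in (0 : ℝ)..(r + 1), (|φ (f t) α| / f t) ^ (p * q')) ^ (1 / (p * q')) :=
  stmt_14_general σ hσ ξhat hξhat p q q' hp hq hq'
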